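/- arXiv:1403.2647 — 2 statements merged into one kernel-verified Lean document; each statement's English description precedes it below -/
import Mathlib

section
/- Let N ≥ 2, let 1 ≤ p < ∞, and let I_1, …, I_N be nonempty sets at least one of which is infinite. Then R([⊕_{k=1}^N c0(I_k)]_p) = 2^{1/p}. -/
open Filter Topology MeasureTheory
open scoped ENNReal ZeroAtInfty

noncomputable section

/-- A sequence in a Banach space is weakly null if `φ (x n) → 0` for every
continuous linear functional `φ`. -/
def WeaklyNull {X : Type*} [NormedAddCommGroup X] [NormedSpace ℝ X] (u : ℕ → X) : Prop :=
  ∀ φ : X →L[ℝ] ℝ, Tendsto (fun n => φ (u n)) atTop (𝓝 0)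

/-- The Schur property: every weakly null sequence converges to `0` in norm. -/
def SchurProperty (X : Type*) [NormedAddCommGroup X] [NormedSpace ℝ X] : Prop :=
  ∀ u : ℕ → X, WeaklyNull u → Tendsto (fun n => ‖u n‖) atTop (𝓝 0)

/-- The Opial modulus `r_X(c)`. -/
def opialModulus (X : Type*) [NormedAddCommGroup X] [NormedSpace ℝ X] (c : ℝ) : ℝ :=
  sInf { d : ℝ | ∃ (x : X) (u : ℕ → X), c ≤ ‖x‖ ∧ WeaklyNull u ∧
    1 ≤ liminf (fun n => ‖u n‖) atTop ∧
    d = liminf (fun n => ‖u n - x‖) atTop - 1 }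

/-- The modulus `η_X(ε, R)`. -/
def etaModulus (X : Type*) [NormedAddCommGroup X] [NormedSpace ℝ X] (ε R : ℝ) : ℝ :=
  sInf { d : ℝ | ∃ (x : X) (u : ℕ → X), ε ≤ ‖x‖ ∧ WeaklyNull u ∧
    limsup (fun n => ‖u n‖) atTop ≤ R ∧
    d = liminf (fun n => ‖u n - x‖) atTop - liminf (fun n => ‖u n‖) atTop }

/-- The García-Falset coefficient `R(X)`. -/
def garciaFalset (X : Type*) [NormedAddCommGroup X] [NormedSpace ℝ X] : ℝ :=
  sSup { a : ℝ | ∃ (x : X) (u : ℕ → X), ‖x‖ ≤ 1 ∧ (∀ n, ‖u n‖ ≤ 1) ∧ WeaklyNull u ∧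
    a = liminf (fun n => ‖u n + x‖) atTop }

/-- The degree of WORTHness `w(X)`. -/
def worthDegree (X : Type*) [NormedAddCommGroup X] [NormedSpace ℝ X] : ℝ :=
  sSup { r : ℝ | 0 ≤ r ∧ ∀ (x : X) (u : ℕ → X), WeaklyNull u →
    r * liminf (fun n => ‖u n + x‖) atTop ≤ liminf (fun n => ‖u n - x‖) atTop }

/-- Gao's modulus of u-convexity `u_X(ε)`. -/
def uModulus (X : Type*) [NormedAddCommGroup X] [NormedSpace ℝ X] (ε : ℝ) : ℝ :=
  sInf { d : ℝ | ∃ (x y : X) (φ : X →L[ℝ] ℝ), ‖x‖ = 1 ∧ ‖y‖ = 1 ∧ ‖φ‖ = 1 ∧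
    φ x = 1 ∧ φ y ≤ 1 - ε ∧ d = 1 - ‖(2⁻¹ : ℝ) • (x + y)‖ }

/-- The c₀-sum of a family of Banach spaces: the closure, inside the ℓ∞-sum, of the
set of finitely supported families. -/
def c0Sum {I : Type*} (X : I → Type*) [∀ i, NormedAddCommGroup (X i)]
    [∀ i, NormedSpace ℝ (X i)] : Submodule ℝ (lp X ∞) :=
  (Submodule.span ℝ { f : lp X ∞ | Set.Finite { i | (f : ∀ i, X i) i ≠ 0 } }).topologicalClosure

end

/-!
A weakly null sequence in `c₀(J)` tends to zero pointwise, so eventually it is `η`-small on the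
finitely many points where a fixed `x` is `η`-large; hence `‖u n + x‖ ≤ max ‖u n‖ ‖x‖ + η` in each
summand `c₀(I k)`. As `max a b ^ p ≤ a ^ p + b ^ p`, summing over `k` gives
`liminf ‖u n + x‖ ≤ (‖u‖ ^ p + ‖x‖ ^ p) ^ (1 / p) ≤ 2 ^ (1 / p)`. The bound is attained by a unit
vector `x` in one summand and `u n = δ (j n)` in another, for distinct points `j n` of an infinite
`I k₀`: the Dirac functions are weakly null because testing a functional `φ` against signed sums
of them gives `∑ |φ (δ j)| ≤ ‖φ‖`.
-/

lemma WeaklyNull.map {X Y : Type*} [NormedAddCommGroup X] [NormedSpace ℝ X]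
    [NormedAddCommGroup Y] [NormedSpace ℝ Y] {u : ℕ → X} (hu : WeaklyNull u) (T : X →L[ℝ] Y) :
    WeaklyNull fun n => T (u n) :=
  fun φ => hu (φ.comp T)

lemma weaklyNull_comp_of_norm_sum_smul_le {X J : Type*} [NormedAddCommGroup X]
    [NormedSpace ℝ X] {e : J → X} {C : ℝ}
    (he : ∀ (S : Finset J) (s : J → ℝ), (∀ j, |s j| ≤ 1) → ‖∑ j ∈ S, s j • e j‖ ≤ C)
    {j : ℕ → J} (hj : Function.Injective j) : WeaklyNull (e ∘ j) := by
  intro φ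
  have hsum : ∀ S : Finset J, ∑ i ∈ S, |φ (e i)| ≤ ‖φ‖ * C := fun S =>
    calc ∑ i ∈ S, |φ (e i)| = φ (∑ i ∈ S, (SignType.sign (φ (e i)) : ℝ) • e i) := by
          simp [map_sum, sign_mul_self]
      _ ≤ ‖φ‖ * ‖∑ i ∈ S, (SignType.sign (φ (e i)) : ℝ) • e i‖ :=
          (le_abs_self _).trans (φ.le_opNorm _)
      _ ≤ ‖φ‖ * C := by
          gcongr
          refine he S _ fun i => ?_
          rcases lt_trichotomy (φ (e i)) 0 with h | h | h <;> simp [h]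
  have hφe : Summable fun i => φ (e i) :=
    summable_abs_iff.mp (summable_of_sum_le (fun _ => abs_nonneg _) hsum)
  rw [← Nat.cofinite_eq_atTop]
  exact hφe.tendsto_cofinite_zero.comp hj.tendsto_cofinite

namespace ZeroAtInftyContinuousMap

section

variable {α β : Type*} [TopologicalSpace α] [NormedAddCommGroup β]

lemma norm_apply_le (f : C₀(α, β)) (x : α) : ‖f x‖ ≤ ‖f‖ :=
  f.toBCF.norm_coe_le_norm x

lemma norm_le {f : C₀(α, β)} {C : ℝ} (hC : 0 ≤ C) : ‖f‖ ≤ C ↔ ∀ x, ‖f x‖ ≤ C :=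
  BoundedContinuousFunction.norm_le (f := f.toBCF) hC

variable [NormedSpace ℝ β]

noncomputable def evalCLM (x : α) : C₀(α, β) →L[ℝ] β :=
  LinearMap.mkContinuous
    { toFun := fun f => f x
      map_add' := fun _ _ => rfl
      map_smul' := fun _ _ => rfl } 1
    fun f => by simpa using f.norm_apply_le x

@[simp] lemma evalCLM_apply (x : α) (f : C₀(α, β)) : evalCLM x f = f x := rfl

end

variable {J β : Type*} [TopologicalSpace J] [DiscreteTopology J]

def single [DecidableEq J] [TopologicalSpace β] [Zero β] (j : J) (b : β) : C₀(J, β) where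
  toFun := Pi.single j b
  continuous_toFun := continuous_of_discreteTopology
  zero_at_infty' := by
    rw [cocompact_eq_cofinite]
    refine tendsto_nhds_of_eventually_eq (eventually_cofinite.mpr ?_)
    exact (Set.finite_singleton j).subset fun i hi =>
      by_contra fun hij => hi (Pi.single_eq_of_ne hij _)

@[simp] lemma coe_single [DecidableEq J] [TopologicalSpace β] [Zero β] (j : J) (b : β) :
    ⇑(single j b) = Pi.single j b := rfl

variable [NormedAddCommGroup β]

@[simp] lemma norm_single [DecidableEq J] (j : J) (b : β) : ‖single j b‖ = ‖b‖ := by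
  refine le_antisymm ((norm_le (norm_nonneg b)).mpr fun i => ?_) ?_
  · rcases eq_or_ne i j with rfl | hij <;> simp [*]
  · simpa using (single j b).norm_apply_le j

lemma norm_sum_smul_single_one_le [DecidableEq J] (S : Finset J) {s : J → ℝ}
    (hs : ∀ j, |s j| ≤ 1) :
    ‖∑ j ∈ S, s j • single j (1 : ℝ)‖ ≤ 1 := by
  refine (norm_le zero_le_one).mpr fun i => ?_
  have : (∑ j ∈ S, s j • single j (1 : ℝ)) i = ∑ j ∈ S, Pi.single j (s j) i := by
    rw [← evalCLM_apply, map_sum]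
    refine Finset.sum_congr rfl fun j _ => ?_
    rw [map_smul, evalCLM_apply, coe_single, smul_eq_mul]
    rcases eq_or_ne i j with rfl | hij <;> simp [*]
  rw [this, Finset.sum_pi_single]
  split_ifs <;> simp [hs]

lemma eventually_norm_add_le {ι : Type*} {l : Filter ι} (f : C₀(J, β)) {g : ι → C₀(J, β)}
    (hg : ∀ j, Tendsto (fun n => g n j) l (𝓝 0)) {η : ℝ} (hη : 0 < η) :
    ∀ᶠ n in l, ‖g n + f‖ ≤ max ‖g n‖ ‖f‖ + η := by
  have hlarge : {j | η ≤ ‖f j‖}.Finite := by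
    have := f.zero_at_infty'
    rw [cocompact_eq_cofinite] at this
    simpa using (tendsto_zero_iff_norm_tendsto_zero.mp this).eventually (gt_mem_nhds hη)
  have hsmall : ∀ᶠ n in l, ∀ j ∈ {j | η ≤ ‖f j‖}, ‖g n j‖ ≤ η :=
    (eventually_all_finite hlarge).mpr fun j _ =>
      (tendsto_zero_iff_norm_tendsto_zero.mp (hg j)).eventually (ge_mem_nhds hη)
  filter_upwards [hsmall] with n hn
  refine (norm_le (by positivity)).mpr fun j => ?_
  rw [add_apply]
  refine (norm_add_le _ _).trans ?_
  by_cases hj : η ≤ ‖f j‖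
  · linarith [hn j hj, f.norm_apply_le j, le_max_right ‖g n‖ ‖f‖]
  · linarith [(g n).norm_apply_le j, le_max_left ‖g n‖ ‖f‖]

end ZeroAtInftyContinuousMap

namespace PiLp

variable {p : ℝ≥0∞} [Fact (1 ≤ p)] {ι : Type*} [Fintype ι]

lemma toReal_pos_of_ne_top (hp : p ≠ ∞) : 0 < p.toReal :=
  ENNReal.toReal_pos (one_pos.trans_le Fact.out).ne' hp

lemma norm_rpow_eq_sum {β : ι → Type*} [∀ i, SeminormedAddCommGroup (β i)] (hp : p ≠ ∞)
    (f : PiLp p β) : ‖f‖ ^ p.toReal = ∑ i, ‖f i‖ ^ p.toReal := by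
  have hp0 := toReal_pos_of_ne_top hp
  rw [norm_eq_sum hp0, ← Real.rpow_mul (by positivity), one_div_mul_cancel hp0.ne',
    Real.rpow_one]

variable {β γ : ι → Type*} [∀ i, SeminormedAddCommGroup (β i)] [∀ i, SeminormedAddCommGroup (γ i)]

lemma norm_le_norm_of_forall_norm_apply_le (hp : p ≠ ∞) {f : PiLp p β} {g : PiLp p γ}
    (h : ∀ i, ‖f i‖ ≤ ‖g i‖) : ‖f‖ ≤ ‖g‖ := by
  have hp0 := toReal_pos_of_ne_top hp
  rw [norm_eq_sum hp0, norm_eq_sum hp0]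
  gcongr with i
  exact h i

lemma norm_toLp_max_norm_rpow_le (hp : p ≠ ∞) (f : PiLp p β) (g : PiLp p γ) :
    ‖WithLp.toLp p (fun i => max ‖f i‖ ‖g i‖)‖ ^ p.toReal ≤ ‖f‖ ^ p.toReal + ‖g‖ ^ p.toReal := by
  have hp0 := toReal_pos_of_ne_top hp
  rw [norm_rpow_eq_sum hp, norm_rpow_eq_sum hp, norm_rpow_eq_sum hp, ← Finset.sum_add_distrib]
  refine Finset.sum_le_sum fun i _ => ?_
  rw [toLp_apply, Real.norm_of_nonneg (le_max_of_le_left (norm_nonneg _)),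
    Real.rpow_max (norm_nonneg _) (norm_nonneg _) hp0.le]
  exact max_le_add_of_nonneg (by positivity) (by positivity)

lemma norm_single_add_single [DecidableEq ι] (hp : p ≠ ∞) {i j : ι} (hij : i ≠ j) (a : β i)
    (b : β j) :
    ‖single p i a + single p j b‖ = (‖a‖ ^ p.toReal + ‖b‖ ^ p.toReal) ^ (1 / p.toReal) := by
  have hp0 := toReal_pos_of_ne_top hp
  rw [norm_eq_sum hp0, Fintype.sum_eq_add i j hij]
  · simp [Pi.single_eq_of_ne hij.symm, Pi.single_eq_of_ne hij]
  · rintro k ⟨hki, hkj⟩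
    simp [Pi.single_eq_of_ne hki, Pi.single_eq_of_ne hkj, Real.zero_rpow hp0.ne']

end PiLp

section

variable {p : ℝ≥0∞} [Fact (1 ≤ p)] {ι : Type*} [Fintype ι] {I : ι → Type*}
  [∀ k, TopologicalSpace (I k)] [∀ k, DiscreteTopology (I k)]

lemma liminf_norm_add_le_of_weaklyNull (hp : p ≠ ∞) {x : PiLp p fun k => C₀(I k, ℝ)}
    {u : ℕ → PiLp p fun k => C₀(I k, ℝ)} (hx : ‖x‖ ≤ 1) (hu : ∀ n, ‖u n‖ ≤ 1)
    (hw : WeaklyNull u) : liminf (fun n => ‖u n + x‖) atTop ≤ 2 ^ (1 / p.toReal) := by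
  have hp0 := PiLp.toReal_pos_of_ne_top hp
  refine le_of_forall_pos_le_add fun ε hε => ?_
  set c : ℝ := (Fintype.card ι : ℝ) ^ (1 / p).toReal
  obtain ⟨η, hη, hcη⟩ : ∃ η > 0, c * η ≤ ε := by
    refine ⟨ε / (c + 1), by positivity, ?_⟩
    rw [mul_div_assoc', div_le_iff₀ (by positivity)]
    nlinarith
  have hcoord : ∀ᶠ n in atTop, ∀ k, ‖(u n + x) k‖ ≤ max ‖u n k‖ ‖x k‖ + η :=
    eventually_all.mpr fun k => (x k).eventually_norm_add_le (fun j => by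
      simpa using hw ((ZeroAtInftyContinuousMap.evalCLM j).comp (PiLp.proj p _ k))) hη
  refine liminf_le_of_frequently_le (hcoord.mono fun n hn => ?_).frequently
    (isBoundedUnder_of ⟨0, fun n => norm_nonneg _⟩)
  have hmax : ‖WithLp.toLp p (fun k => max ‖u n k‖ ‖x k‖)‖ ≤ 2 ^ (1 / p.toReal) := by
    rw [one_div, Real.le_rpow_inv_iff_of_pos (norm_nonneg _) zero_le_two hp0]
    calc _ ≤ ‖u n‖ ^ p.toReal + ‖x‖ ^ p.toReal := PiLp.norm_toLp_max_norm_rpow_le hp _ _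
      _ ≤ 1 + 1 := by
          gcongr
          exacts [Real.rpow_le_one (norm_nonneg _) (hu n) hp0.le,
            Real.rpow_le_one (norm_nonneg _) hx hp0.le]
      _ = 2 := one_add_one_eq_two
  calc ‖u n + x‖
      ≤ ‖WithLp.toLp p (fun k => max ‖u n k‖ ‖x k‖) + WithLp.toLp p (Function.const ι η)‖ :=
        PiLp.norm_le_norm_of_forall_norm_apply_le hp fun k => (hn k).trans (le_abs_self _)
    _ ≤ ‖WithLp.toLp p (fun k => max ‖u n k‖ ‖x k‖)‖ + c * η := by
        refine (norm_add_le _ _).trans_eq ?_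
        rw [PiLp.norm_toLp_const hp, Real.norm_of_nonneg hη.le]
        rfl
    _ ≤ 2 ^ (1 / p.toReal) + ε := add_le_add hmax hcη

lemma exists_weaklyNull_norm_add_eq (hp : p ≠ ∞) {k₀ k₁ : ι} (hk : k₀ ≠ k₁) [Infinite (I k₀)]
    [Nonempty (I k₁)] :
    ∃ (x : PiLp p fun k => C₀(I k, ℝ)) (u : ℕ → PiLp p fun k => C₀(I k, ℝ)), ‖x‖ ≤ 1 ∧
      (∀ n, ‖u n‖ ≤ 1) ∧ WeaklyNull u ∧ ∀ n, ‖u n + x‖ = 2 ^ (1 / p.toReal) := by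
  classical
  let δ {k : ι} (j : I k) : C₀(I k, ℝ) := ZeroAtInftyContinuousMap.single j 1
  let j := Infinite.natEmbedding (I k₀)
  let T : C₀(I k₀, ℝ) →L[ℝ] PiLp p fun k => C₀(I k, ℝ) :=
    (PiLp.continuousLinearEquiv p ℝ _).symm.toContinuousLinearMap.comp
      (ContinuousLinearMap.single ℝ (fun k => C₀(I k, ℝ)) k₀)
  refine ⟨PiLp.single p k₁ (δ (Classical.arbitrary (I k₁))), fun n => PiLp.single p k₀ (δ (j n)),
    by simp [δ], fun n => by simp [δ], ?_, fun n => ?_⟩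
  · exact (weaklyNull_comp_of_norm_sum_smul_le (e := δ) (C := 1)
      (ZeroAtInftyContinuousMap.norm_sum_smul_single_one_le) j.injective).map T
  · rw [PiLp.norm_single_add_single hp hk]
    norm_num [δ]

end

/-- For `N ≥ 2`, `1 ≤ p < ∞` and nonempty discrete sets `I 0, …, I (N-1)` at least one of which
is infinite, the García-Falset coefficient of `[⊕ₖ c₀(I k)]_p` equals `2^(1/p)`. -/
theorem statement5 (p : ℝ≥0∞) [Fact (1 ≤ p)] (hp : p ≠ ⊤) (N : ℕ) (hN : 2 ≤ N)
    (I : Fin N → Type*) [∀ k, TopologicalSpace (I k)] [∀ k, DiscreteTopology (I k)]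
    [∀ k, Nonempty (I k)] (hinf : ∃ k, Infinite (I k)) :
    garciaFalset (PiLp p fun k => C₀(I k, ℝ)) = 2 ^ (1 / p.toReal) := by
  obtain ⟨k₀, hk₀⟩ := hinf
  have : Nontrivial (Fin N) := Fin.nontrivial_iff_two_le.mpr hN
  obtain ⟨k₁, hk⟩ := exists_ne k₀
  obtain ⟨x, u, hx, hu, hw, hxu⟩ := exists_weaklyNull_norm_add_eq (I := I) hp hk.symm
  refine IsGreatest.csSup_eq ⟨⟨x, u, hx, hu, hw, by simp [hxu]⟩, ?_⟩
  rintro a ⟨x, u, hx, hu, hw, rfl⟩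
  exact liminf_norm_add_le_of_weaklyNull hp hx hu hw
end

section
/- Let 1 ≤ p < ∞, let I be any index set and let (X_i)_{i∈I} be a family of real Banach spaces each having the nonstrict Opial property. Then the ℓp-sum X := [⊕_{i∈I} X_i]_p has the nonstrict Opial property: for every weakly null sequence (x_n) in X and every x ∈ X, limsup_n ‖x_n‖_p ≤ limsup_n ‖x_n − x‖_p. -/
open Filter Topology MeasureTheory
open scoped ENNReal ZeroAtInfty

/-!
If `x` is supported on a finite set `F`, then for every `v ∈ ℓᵖ`
`‖v - x‖ᵖ - ‖v‖ᵖ = ∑_{i ∈ F} (‖vᵢ - xᵢ‖ᵖ - ‖vᵢ‖ᵖ)`.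
Along a subsequence on which `‖uₙ‖ → limsup ‖uₙ‖` and the finitely many coordinate norms
`‖uₙ,ᵢ‖`, `‖uₙ,ᵢ - xᵢ‖` converge, the Opial property of each `Xᵢ` makes every summand have a
nonnegative limit, which gives the inequality for such `x`. Since weakly null sequences are
bounded (Banach–Steinhaus), `x ↦ limsup ‖uₙ - x‖` is `1`-Lipschitz, and the inequality passes
to the closure of the finitely supported families, which is all of `ℓᵖ` for `p < ∞`.
-/

def NonstrictOpial (E : Type*) [NormedAddCommGroup E] [NormedSpace ℝ E] : Prop :=
  ∀ u : ℕ → E, WeaklyNull u → ∀ z : E,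
    limsup (fun n => ‖u n‖) atTop ≤ limsup (fun n => ‖u n - z‖) atTop

namespace WeaklyNull

variable {E F : Type*} [NormedAddCommGroup E] [NormedSpace ℝ E] [NormedAddCommGroup F]
  [NormedSpace ℝ F] {u : ℕ → E}

theorem comp_tendsto (hu : WeaklyNull u) {φ : ℕ → ℕ} (hφ : Tendsto φ atTop atTop) :
    WeaklyNull (u ∘ φ) :=
  fun f => (hu f).comp hφ

theorem map_s14 (hu : WeaklyNull u) (T : E →L[ℝ] F) : WeaklyNull (fun n => T (u n)) :=
  fun f => hu (f.comp T)

theorem exists_norm_le (hu : WeaklyNull u) : ∃ C, ∀ n, ‖u n‖ ≤ C := by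
  have hbdd : ∀ f : StrongDual ℝ E,
      ∃ C, ∀ n, ‖NormedSpace.inclusionInDoubleDual ℝ E (u n) f‖ ≤ C := fun f => by
    obtain ⟨C, hC⟩ := (hu f).norm.bddAbove_range
    exact ⟨C, fun n => hC (Set.mem_range_self n)⟩
  obtain ⟨C, hC⟩ := banach_steinhaus hbdd
  exact ⟨C, fun n => (NormedSpace.inclusionInDoubleDualLi ℝ (E := E)).norm_map (u n) ▸ hC n⟩

end WeaklyNull

theorem le_limsup_of_tendsto_comp {f : ℕ → ℝ} (hf : IsBoundedUnder (· ≤ ·) atTop f)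
    {φ : ℕ → ℕ} (hφ : Tendsto φ atTop atTop) {b : ℝ} (h : Tendsto (f ∘ φ) atTop (𝓝 b)) :
    b ≤ limsup f atTop :=
  h.limsup_eq ▸ hφ.limsup_comp_le_limsup h.isCoboundedUnder_le hf

section BoundedSequence

variable {E : Type*} [SeminormedAddCommGroup E] {u : ℕ → E} {C : ℝ}

theorem isBoundedUnder_norm_sub (hC : ∀ n, ‖u n‖ ≤ C) (x : E) :
    IsBoundedUnder (· ≤ ·) atTop (fun n => ‖u n - x‖) :=
  isBoundedUnder_of ⟨C + ‖x‖, fun n => (norm_sub_le _ _).trans (by linarith [hC n])⟩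

theorem limsup_norm_sub_le_add_dist (hC : ∀ n, ‖u n‖ ≤ C) (x y : E) :
    limsup (fun n => ‖u n - x‖) atTop ≤ limsup (fun n => ‖u n - y‖) atTop + dist x y := by
  have htri : ∀ n, ‖u n - x‖ ≤ ‖u n - y‖ + dist x y := fun n => by
    rw [dist_comm, dist_eq_norm]
    simpa using norm_sub_le_norm_sub_add_norm_sub (u n) y x
  rw [← limsup_add_const atTop _ _ (isBoundedUnder_norm_sub hC y)
    (isCoboundedUnder_le_of_le atTop fun n => norm_nonneg _)]
  exact limsup_le_limsup (Eventually.of_forall htri)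
    (isCoboundedUnder_le_of_le atTop fun n => norm_nonneg _)
    (isBoundedUnder_of ⟨C + ‖y‖ + dist x y, fun n => by
      linarith [norm_sub_le (u n) y, hC n]⟩)

theorem lipschitzWith_limsup_norm_sub (hC : ∀ n, ‖u n‖ ≤ C) :
    LipschitzWith 1 (fun x => limsup (fun n => ‖u n - x‖) atTop) :=
  LipschitzWith.of_le_add (limsup_norm_sub_le_add_dist hC)

end BoundedSequence

namespace lp

variable {I : Type*} {X : I → Type*} [∀ i, NormedAddCommGroup (X i)] {p : ℝ≥0∞}

theorem norm_sub_rpow_sub_norm_rpow (hp : 0 < p.toReal) (v x : lp X p) {F : Finset I}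
    (hx : ∀ i ∉ F, x i = 0) :
    ‖v - x‖ ^ p.toReal - ‖v‖ ^ p.toReal =
      ∑ i ∈ F, (‖v i - x i‖ ^ p.toReal - ‖v i‖ ^ p.toReal) := by
  have hsum := (lp.hasSum_norm hp (v - x)).sub (lp.hasSum_norm hp v)
  simp only [lp.coeFn_sub, Pi.sub_apply] at hsum
  refine hsum.unique (hasSum_sum_of_ne_finset_zero fun i hi => ?_)
  rw [hx i hi, sub_zero, sub_self]

variable [Fact (1 ≤ p)]

theorem le_of_tendsto_norm_of_tendsto_coord_norm (hp : 0 < p.toReal) {v : ℕ → lp X p}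
    {x : lp X p} {F : Finset I} (hx : ∀ i ∉ F, x i = 0) {L B : ℝ} {a c : F → ℝ}
    (hL : Tendsto (fun k => ‖v k‖) atTop (𝓝 L)) (hB : Tendsto (fun k => ‖v k - x‖) atTop (𝓝 B))
    (ha : ∀ i : F, Tendsto (fun k => ‖v k i‖) atTop (𝓝 (a i)))
    (hc : ∀ i : F, Tendsto (fun k => ‖v k i - x i‖) atTop (𝓝 (c i)))
    (hac : ∀ i, a i ≤ c i) : L ≤ B := by
  have hB_sub_L : Tendsto (fun k => ‖v k - x‖ ^ p.toReal - ‖v k‖ ^ p.toReal) atTop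
      (𝓝 (B ^ p.toReal - L ^ p.toReal)) :=
    (hB.rpow_const (Or.inr hp.le)).sub (hL.rpow_const (Or.inr hp.le))
  have hsum : Tendsto (fun k => ‖v k - x‖ ^ p.toReal - ‖v k‖ ^ p.toReal) atTop
      (𝓝 (∑ i : F, (c i ^ p.toReal - a i ^ p.toReal))) := by
    simp_rw [norm_sub_rpow_sub_norm_rpow hp _ x hx, ← Finset.sum_coe_sort F]
    exact tendsto_finsetSum _ fun i _ =>
      ((hc i).rpow_const (Or.inr hp.le)).sub ((ha i).rpow_const (Or.inr hp.le))
  have ha0 : ∀ i, 0 ≤ a i := fun i => ge_of_tendsto' (ha i) fun k => norm_nonneg _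
  have hL0 : 0 ≤ L := ge_of_tendsto' hL fun k => norm_nonneg _
  have hB0 : 0 ≤ B := ge_of_tendsto' hB fun k => norm_nonneg _
  have hpow : L ^ p.toReal ≤ B ^ p.toReal := by
    rw [← sub_nonneg, tendsto_nhds_unique hB_sub_L hsum]
    exact Finset.sum_nonneg fun i _ =>
      sub_nonneg.2 (Real.rpow_le_rpow (ha0 i) (hac i) hp.le)
  exact (Real.rpow_le_rpow_iff hL0 hB0 hp).1 hpow

variable [∀ i, NormedSpace ℝ (X i)]

theorem limsup_norm_le_limsup_norm_sub_of_support_subset (hp : p ≠ ⊤)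
    (hX : ∀ i, NonstrictOpial (X i)) {u : ℕ → lp X p} (hu : WeaklyNull u) {x : lp X p}
    {F : Finset I} (hx : ∀ i ∉ F, x i = 0) :
    limsup (fun n => ‖u n‖) atTop ≤ limsup (fun n => ‖u n - x‖) atTop := by
  have hp0 : p ≠ 0 := (zero_lt_one.trans_le Fact.out).ne'
  obtain ⟨C, hC⟩ := hu.exists_norm_le
  obtain ⟨φ, hφL, hφ⟩ := exists_seq_tendsto_limsup (u := fun n => ‖u n‖)
    (isCoboundedUnder_le_of_le atTop fun n => norm_nonneg _) (isBoundedUnder_of ⟨C, hC⟩)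
  let g : ℕ → ℝ × (F → ℝ × ℝ) := fun k =>
    (‖u (φ k) - x‖, fun i => (‖u (φ k) i‖, ‖u (φ k) i - x i‖))
  have hg : ∀ k, g k ∈ Metric.closedBall 0 (C + ‖x‖) := fun k => by
    have hui : ∀ i, ‖u (φ k) i‖ ≤ C := fun i =>
      (lp.norm_apply_le_norm hp0 (u (φ k)) i).trans (hC (φ k))
    have hxi : ∀ i, ‖x i‖ ≤ ‖x‖ := lp.norm_apply_le_norm hp0 x
    have hCx : 0 ≤ C + ‖x‖ := add_nonneg ((norm_nonneg _).trans (hC 0)) (norm_nonneg x)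
    simp only [g, mem_closedBall_zero_iff, norm_prod_le_iff, pi_norm_le_iff_of_nonneg hCx,
      norm_norm]
    refine ⟨(norm_sub_le _ _).trans (by linarith [hC (φ k)]), fun i =>
      ⟨by linarith [hui i, norm_nonneg x], (norm_sub_le _ _).trans (by linarith [hui i, hxi i])⟩⟩
  obtain ⟨⟨B, ac⟩, -, φ', hφ', hlim⟩ := tendsto_subseq_of_bounded Metric.isBounded_closedBall hg
  have hψ : Tendsto (φ ∘ φ') atTop atTop := hφ.comp hφ'.tendsto_atTop
  have hcoord : ∀ i : F, Tendsto (fun k => (g (φ' k)).2 i) atTop (𝓝 (ac i)) := fun i =>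
    ((continuous_apply i).tendsto _).comp hlim.snd_nhds
  have ha : ∀ i : F, Tendsto (fun k => ‖u (φ (φ' k)) i‖) atTop (𝓝 (ac i).1) := fun i =>
    (hcoord i).fst_nhds
  have hc : ∀ i : F, Tendsto (fun k => ‖u (φ (φ' k)) i - x i‖) atTop (𝓝 (ac i).2) :=
    fun i => (hcoord i).snd_nhds
  have hOpial : ∀ i : F, (ac i).1 ≤ (ac i).2 := fun i => by
    have := hX i (fun k => u (φ (φ' k)) i)
      ((hu.comp_tendsto hψ).map_s14 (lp.evalCLM ℝ X p i)) (x i)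
    rwa [(ha i).limsup_eq, (hc i).limsup_eq] at this
  calc limsup (fun n => ‖u n‖) atTop
      ≤ B := le_of_tendsto_norm_of_tendsto_coord_norm (ENNReal.toReal_pos hp0 hp) hx
        (hφL.comp hφ'.tendsto_atTop) hlim.fst_nhds ha hc hOpial
    _ ≤ limsup (fun n => ‖u n - x‖) atTop :=
        le_limsup_of_tendsto_comp (isBoundedUnder_norm_sub hC x) hψ hlim.fst_nhds

end lp

theorem nonstrictOpial_lp {I : Type*} {X : I → Type*} [∀ i, NormedAddCommGroup (X i)]
    [∀ i, NormedSpace ℝ (X i)] {p : ℝ≥0∞} [Fact (1 ≤ p)] (hp : p ≠ ⊤)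
    (hX : ∀ i, NonstrictOpial (X i)) : NonstrictOpial (lp X p) := by
  classical
  intro u hu x
  obtain ⟨C, hC⟩ := hu.exists_norm_le
  have hclosed : IsClosed {y : lp X p |
      limsup (fun n => ‖u n‖) atTop ≤ limsup (fun n => ‖u n - y‖) atTop} :=
    isClosed_le continuous_const (lipschitzWith_limsup_norm_sub hC).continuous
  refine hclosed.mem_of_tendsto (lp.hasSum_single hp x) (Eventually.of_forall fun F => ?_)
  refine lp.limsup_norm_le_limsup_norm_sub_of_support_subset hp hX hu (F := F) fun i hi => ?_
  rw [lp.coeFn_sum, Finset.sum_apply]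
  exact Finset.sum_eq_zero fun j hj => lp.single_apply_ne p j _ (ne_of_mem_of_not_mem hj hi).symm

theorem statement14_general (p : ℝ≥0∞) [Fact (1 ≤ p)] (hp : p ≠ ⊤) {I : Type*}
    (X : I → Type*) [∀ i, NormedAddCommGroup (X i)] [∀ i, NormedSpace ℝ (X i)]
    (hOp : ∀ i, ∀ u : ℕ → X i, WeaklyNull u → ∀ z : X i,
      limsup (fun n => ‖u n‖) atTop ≤ limsup (fun n => ‖u n - z‖) atTop)
    (u : ℕ → lp X p) (hu : WeaklyNull u) (x : lp X p) :
    limsup (fun n => ‖u n‖) atTop ≤ limsup (fun n => ‖u n - x‖) atTop :=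
  nonstrictOpial_lp hp hOp u hu x

/-- The ℓᵖ-sum (`1 ≤ p < ∞`) of a family of Banach spaces with the nonstrict Opial property
has the nonstrict Opial property. -/
theorem statement14 (p : ℝ≥0∞) [Fact (1 ≤ p)] (hp : p ≠ ⊤) {I : Type*}
    (X : I → Type*) [∀ i, NormedAddCommGroup (X i)] [∀ i, NormedSpace ℝ (X i)]
    [∀ i, CompleteSpace (X i)]
    (hOp : ∀ i, ∀ u : ℕ → X i, WeaklyNull u → ∀ z : X i,
      limsup (fun n => ‖u n‖) atTop ≤ limsup (fun n => ‖u n - z‖) atTop)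
    (u : ℕ → lp X p) (hu : WeaklyNull u) (x : lp X p) :
    limsup (fun n => ‖u n‖) atTop ≤ limsup (fun n => ‖u n - x‖) atTop :=
  statement14_general p hp X hOp u hu x
end
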